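/- Let d ≥ 2, μ > 0, D ∈ ℝ with √(dμ) ≠ -D, let C = (e^{2√(dμ)} - e^{D+√(dμ)})/(e^{D+√(dμ)} - 1), and let u(r) = √(dμ)(e^{2√(dμ)r} - C)/(e^{2√(dμ)r} + C). For any D_i ∈ ℝ, the function L_i(r) = u(r)/d + c_i·√(dμ)·e^{√(dμ)r}/(C + e^{2√(dμ)r}), with c_i = (D_i - D/d)/∫₀¹ √(dμ)e^{√(dμ)x}/(C + e^{2√(dμ)x}) dx, satisfies L_i' = -u·L_i + μ on [0,1] and ∫₀¹ L_i(r) dr = D_i. Moreover L_i is the unique C¹ solution of this linear ODE with that integral constraint. -/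

import Mathlib

/-!
With `μ = s² / d`, the trace `u = riccatiSol s C` solves the Riccati equation `u' = s² - u²`, so
`u / d` is a particular solution of `L' = -u L + μ`, while `kernelSol s C = s e^{sr} / (C + e^{2sr})`
solves the homogeneous equation `h' = -u h`. Since `log (C + e^{2sr}) - s r` is an antiderivative of
`u` and the choice of `C` gives `C + e^{2s} = e^{D+s} (C + 1)`, the mean of `u` is `D`. The
denominator `C + e^{2sr}` has the sign of `e^{D+s} - 1` on `[0, 1]`, so `h` has nonzero mean: this
determines `cᵢ`, and it gives uniqueness, because the difference of two solutions is a multiple of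
`h` with zero mean.
-/

open Real Set

noncomputable def riccatiSol (s C : ℝ) (r : ℝ) : ℝ :=
  s * (exp (2 * s * r) - C) / (exp (2 * s * r) + C)

noncomputable def kernelSol (s C : ℝ) (r : ℝ) : ℝ :=
  s * exp (s * r) / (C + exp (2 * s * r))

noncomputable def dirichletConst (s D : ℝ) : ℝ :=
  (exp (2 * s) - exp (D + s)) / (exp (D + s) - 1)

section Profiles

variable {s C r : ℝ}

theorem hasDerivAt_exp_const_mul (a r : ℝ) :
    HasDerivAt (fun x => exp (a * x)) (exp (a * r) * a) r := by
  simpa using ((hasDerivAt_id r).const_mul a).exp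

theorem hasDerivAt_riccatiSol (hP : C + exp (2 * s * r) ≠ 0) :
    HasDerivAt (riccatiSol s C) (s ^ 2 - riccatiSol s C r ^ 2) r := by
  have hP' : exp (2 * s * r) + C ≠ 0 := by rwa [add_comm]
  have h := (((hasDerivAt_exp_const_mul (2 * s) r).sub_const C).const_mul s).div
    ((hasDerivAt_exp_const_mul (2 * s) r).add_const C) hP'
  refine h.congr_deriv ?_
  simp only [riccatiSol]
  generalize exp (2 * s * r) = E at hP' ⊢
  field_simp
  ring

theorem hasDerivAt_kernelSol (hP : C + exp (2 * s * r) ≠ 0) :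
    HasDerivAt (kernelSol s C) (-riccatiSol s C r * kernelSol s C r) r := by
  have hP' : exp (2 * s * r) + C ≠ 0 := by rwa [add_comm]
  have h := ((hasDerivAt_exp_const_mul s r).const_mul s).div
    ((hasDerivAt_exp_const_mul (2 * s) r).const_add C) hP
  refine h.congr_deriv ?_
  simp only [riccatiSol, kernelSol]
  field_simp
  ring

theorem hasDerivAt_riccatiSol_div_add_mul_kernelSol {d : ℝ} (hd : d ≠ 0) (c : ℝ)
    (hP : C + exp (2 * s * r) ≠ 0) :
    HasDerivAt (fun x => riccatiSol s C x / d + c * kernelSol s C x)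
      (-riccatiSol s C r * (riccatiSol s C r / d + c * kernelSol s C r) + s ^ 2 / d) r := by
  refine (((hasDerivAt_riccatiSol hP).div_const d).add
    ((hasDerivAt_kernelSol hP).const_mul c)).congr_deriv ?_
  field_simp
  ring

end Profiles

section DirichletConst

variable {s D : ℝ}

theorem dirichletConst_add_exp_two_mul (ht : exp (D + s) ≠ 1) :
    dirichletConst s D + exp (2 * s) = exp (D + s) * (dirichletConst s D + 1) := by
  have ht' : exp (D + s) - 1 ≠ 0 := sub_ne_zero.mpr ht
  simp only [dirichletConst]
  field_simp
  ring

/-- Multiplied by `exp (D + s) - 1`, the denominator `C + exp (2 s r)` becomes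
`(exp (2 s) - exp (2 s r)) + exp (D + s) (exp (2 s r) - 1)`, a sum of nonnegative terms
that do not vanish together. -/
theorem dirichletConst_add_exp_mul_pos (hs : 0 < s) (ht : exp (D + s) ≠ 1) {r : ℝ}
    (hr : r ∈ Icc (0 : ℝ) 1) :
    0 < (dirichletConst s D + exp (2 * s * r)) * (exp (D + s) - 1) := by
  have ht' : exp (D + s) - 1 ≠ 0 := sub_ne_zero.mpr ht
  have hrewrite : (dirichletConst s D + exp (2 * s * r)) * (exp (D + s) - 1) =
      (exp (2 * s) - exp (2 * s * r)) + exp (D + s) * (exp (2 * s * r) - 1) := by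
    simp only [dirichletConst]
    field_simp
    ring
  have hlow : 1 ≤ exp (2 * s * r) := one_le_exp (by nlinarith [hr.1])
  have hup : exp (2 * s * r) ≤ exp (2 * s) := exp_le_exp.mpr (by nlinarith [hr.2])
  have hDs : 0 < exp (D + s) := exp_pos _
  rw [hrewrite]
  rcases hup.lt_or_eq with hlt | heq
  · nlinarith
  · have : 1 < exp (2 * s) := one_lt_exp_iff.mpr (by positivity)
    nlinarith

end DirichletConst

section Integrals

variable {s C : ℝ}

theorem intervalIntegrable_riccatiSol (hP : ∀ r ∈ Icc (0 : ℝ) 1, C + exp (2 * s * r) ≠ 0) :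
    IntervalIntegrable (riccatiSol s C) MeasureTheory.volume 0 1 :=
  (HasDerivAt.continuousOn fun r hr => hasDerivAt_riccatiSol (hP r hr)).intervalIntegrable_of_Icc
    zero_le_one

theorem intervalIntegrable_kernelSol (hP : ∀ r ∈ Icc (0 : ℝ) 1, C + exp (2 * s * r) ≠ 0) :
    IntervalIntegrable (kernelSol s C) MeasureTheory.volume 0 1 :=
  (HasDerivAt.continuousOn fun r hr => hasDerivAt_kernelSol (hP r hr)).intervalIntegrable_of_Icc
    zero_le_one

theorem integral_riccatiSol (hP : ∀ r ∈ Icc (0 : ℝ) 1, C + exp (2 * s * r) ≠ 0) :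
    ∫ r in (0 : ℝ)..1, riccatiSol s C r = log (C + exp (2 * s)) - log (C + 1) - s := by
  have hF : ∀ r ∈ uIcc (0 : ℝ) 1,
      HasDerivAt (fun x => log (C + exp (2 * s * x)) - s * x) (riccatiSol s C r) r := by
    intro r hr
    have hPr := hP r (by rwa [uIcc_of_le zero_le_one] at hr)
    refine ((((hasDerivAt_exp_const_mul (2 * s) r).const_add C).log hPr).sub
      ((hasDerivAt_id r).const_mul s)).congr_deriv ?_
    have hPr' : exp (2 * s * r) + C ≠ 0 := by rwa [add_comm]
    simp only [riccatiSol]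
    field_simp
    ring
  rw [intervalIntegral.integral_eq_sub_of_hasDerivAt hF (intervalIntegrable_riccatiSol hP)]
  simp only [mul_one, mul_zero, exp_zero]
  ring

theorem integral_kernelSol_ne_zero {t : ℝ} (hs : 0 < s)
    (hsign : ∀ r ∈ Icc (0 : ℝ) 1, 0 < (C + exp (2 * s * r)) * t) :
    ∫ r in (0 : ℝ)..1, kernelSol s C r ≠ 0 := by
  have hP : ∀ r ∈ Icc (0 : ℝ) 1, C + exp (2 * s * r) ≠ 0 :=
    fun r hr => left_ne_zero_of_mul (hsign r hr).ne'
  have hpos : 0 < ∫ r in (0 : ℝ)..1, kernelSol s C r * t := by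
    refine intervalIntegral.intervalIntegral_pos_of_pos_on
      ((intervalIntegrable_kernelSol hP).mul_const t) (fun r hr => ?_) zero_lt_one
    have hr' := Ioo_subset_Icc_self hr
    have hsq : kernelSol s C r * t =
        s * exp (s * r) * ((C + exp (2 * s * r)) * t) / (C + exp (2 * s * r)) ^ 2 := by
      simp only [kernelSol]
      field_simp [hP r hr']
    rw [hsq]
    exact div_pos (mul_pos (mul_pos hs (exp_pos _)) (hsign r hr')) (sq_pos_of_ne_zero (hP r hr'))
  rw [intervalIntegral.integral_mul_const] at hpos
  exact left_ne_zero_of_mul hpos.ne'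

theorem integral_riccatiSol_dirichletConst {D : ℝ} (ht : exp (D + s) ≠ 1)
    (hP : ∀ r ∈ Icc (0 : ℝ) 1, dirichletConst s D + exp (2 * s * r) ≠ 0) :
    ∫ r in (0 : ℝ)..1, riccatiSol s (dirichletConst s D) r = D := by
  have hC1 : dirichletConst s D + 1 ≠ 0 := by simpa using hP 0 (by simp)
  rw [integral_riccatiSol hP, dirichletConst_add_exp_two_mul ht,
    log_mul (exp_ne_zero _) hC1, log_exp]
  ring

end Integrals

theorem eqOn_div_mul_of_hasDerivWithinAt {a b : ℝ} {p y h : ℝ → ℝ}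
    (hy : ∀ r ∈ Icc a b, HasDerivWithinAt y (p r * y r) (Icc a b) r)
    (hh : ∀ r ∈ Icc a b, HasDerivWithinAt h (p r * h r) (Icc a b) r)
    (hh0 : ∀ r ∈ Icc a b, h r ≠ 0) :
    EqOn y (fun r => y a / h a * h r) (Icc a b) := by
  have hq : ∀ r ∈ Icc a b, HasDerivWithinAt (fun x => y x / h x) 0 (Icc a b) r := fun r hr =>
    ((hy r hr).div (hh r hr) (hh0 r hr)).congr_deriv (by ring)
  have hconst := constant_of_has_deriv_right_zero (fun r hr => (hq r hr).continuousWithinAt)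
    fun r hr => (hq r (Ico_subset_Icc_self hr)).mono_of_mem_nhdsWithin (Icc_mem_nhdsGE_of_mem hr)
  intro r hr
  rw [← hconst r hr]
  field_simp [hh0 r hr]

theorem eqOn_zero_of_hasDerivWithinAt_of_integral_eq_zero {a b : ℝ} (hab : a ≤ b)
    {p y h : ℝ → ℝ}
    (hy : ∀ r ∈ Icc a b, HasDerivWithinAt y (p r * y r) (Icc a b) r)
    (hh : ∀ r ∈ Icc a b, HasDerivWithinAt h (p r * h r) (Icc a b) r)
    (hh0 : ∀ r ∈ Icc a b, h r ≠ 0) (hhI : ∫ r in a..b, h r ≠ 0)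
    (hyI : ∫ r in a..b, y r = 0) :
    EqOn y 0 (Icc a b) := by
  have hK := eqOn_div_mul_of_hasDerivWithinAt hy hh hh0
  have hK0 : y a / h a * ∫ r in a..b, h r = 0 := by
    rw [← intervalIntegral.integral_const_mul, ← hyI]
    exact intervalIntegral.integral_congr fun r hr => (hK (uIcc_of_le hab ▸ hr)).symm
  have hya : y a / h a = 0 := (mul_eq_zero.mp hK0).resolve_right hhI
  intro r hr
  simpa [hya] using hK hr

noncomputable def dirichletSol (s D d c : ℝ) (r : ℝ) : ℝ :=
  riccatiSol s (dirichletConst s D) r / d + c * kernelSol s (dirichletConst s D) r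

section DirichletSol

variable {s D : ℝ} (hs : 0 < s) (ht : exp (D + s) ≠ 1)
include hs ht

theorem dirichletConst_add_exp_mul_ne_zero {r : ℝ} (hr : r ∈ Icc (0 : ℝ) 1) :
    dirichletConst s D + exp (2 * s * r) ≠ 0 :=
  left_ne_zero_of_mul (dirichletConst_add_exp_mul_pos hs ht hr).ne'

theorem integral_kernelSol_dirichletConst_ne_zero :
    ∫ r in (0 : ℝ)..1, kernelSol s (dirichletConst s D) r ≠ 0 :=
  integral_kernelSol_ne_zero hs fun _ hr => dirichletConst_add_exp_mul_pos hs ht hr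

theorem hasDerivAt_dirichletSol {d : ℝ} (hd : d ≠ 0) (c : ℝ) {r : ℝ} (hr : r ∈ Icc (0 : ℝ) 1) :
    HasDerivAt (dirichletSol s D d c)
      (-riccatiSol s (dirichletConst s D) r * dirichletSol s D d c r + s ^ 2 / d) r :=
  hasDerivAt_riccatiSol_div_add_mul_kernelSol hd c (dirichletConst_add_exp_mul_ne_zero hs ht hr)

theorem integral_dirichletSol (d c : ℝ) :
    ∫ r in (0 : ℝ)..1, dirichletSol s D d c r =
      D / d + c * ∫ r in (0 : ℝ)..1, kernelSol s (dirichletConst s D) r := by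
  have hP := fun r (hr : r ∈ Icc (0 : ℝ) 1) => dirichletConst_add_exp_mul_ne_zero hs ht hr
  unfold dirichletSol
  rw [intervalIntegral.integral_add
    ((intervalIntegrable_riccatiSol hP).div_const _) ((intervalIntegrable_kernelSol hP).const_mul _),
    intervalIntegral.integral_div, intervalIntegral.integral_const_mul,
    integral_riccatiSol_dirichletConst ht hP]

theorem eqOn_dirichletSol {d : ℝ} (hd : d ≠ 0) (c : ℝ) {M : ℝ → ℝ}
    (hM : ∀ r ∈ Icc (0 : ℝ) 1, HasDerivWithinAt M
      (-riccatiSol s (dirichletConst s D) r * M r + s ^ 2 / d) (Icc 0 1) r)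
    (hMI : ∫ r in (0 : ℝ)..1, M r = ∫ r in (0 : ℝ)..1, dirichletSol s D d c r) :
    EqOn M (dirichletSol s D d c) (Icc 0 1) := by
  have hP := fun r (hr : r ∈ Icc (0 : ℝ) 1) => dirichletConst_add_exp_mul_ne_zero hs ht hr
  have hL := fun r (hr : r ∈ Icc (0 : ℝ) 1) => hasDerivAt_dirichletSol hs ht hd c hr
  have hMint : IntervalIntegrable M MeasureTheory.volume 0 1 :=
    ContinuousOn.intervalIntegrable_of_Icc zero_le_one fun r hr => (hM r hr).continuousWithinAt
  have hLint : IntervalIntegrable (dirichletSol s D d c) MeasureTheory.volume 0 1 :=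
    (HasDerivAt.continuousOn hL).intervalIntegrable_of_Icc zero_le_one
  have hdiff := eqOn_zero_of_hasDerivWithinAt_of_integral_eq_zero zero_le_one
    (p := fun r => -riccatiSol s (dirichletConst s D) r) (y := fun r => M r - dirichletSol s D d c r)
    (fun r hr => ((hM r hr).sub (hL r hr).hasDerivWithinAt).congr_deriv (by ring))
    (fun r hr => (hasDerivAt_kernelSol (hP r hr)).hasDerivWithinAt)
    (fun r hr => div_ne_zero (mul_ne_zero hs.ne' (exp_ne_zero _)) (hP r hr))
    (integral_kernelSol_dirichletConst_ne_zero hs ht)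
    (by rw [intervalIntegral.integral_sub hMint hLint, hMI, sub_self])
  exact fun r hr => sub_eq_zero.mp (hdiff hr)

end DirichletSol

theorem stmt_7 (d : ℕ) (hd : 2 ≤ d) (μ D Di : ℝ) (hμ : 0 < μ)
    (hne : Real.sqrt (d * μ) ≠ -D)
    (s : ℝ) (hs : s = Real.sqrt (d * μ))
    (C : ℝ) (hC : C = (Real.exp (2 * s) - Real.exp (D + s)) / (Real.exp (D + s) - 1))
    (u : ℝ → ℝ)
    (hu : u = fun r => s * (Real.exp (2 * s * r) - C) / (Real.exp (2 * s * r) + C))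
    (ci : ℝ)
    (hci : ci = (Di - D / d) /
      ∫ x in (0:ℝ)..1, s * Real.exp (s * x) / (C + Real.exp (2 * s * x)))
    (L : ℝ → ℝ)
    (hL : L = fun r => u r / d + ci * s * Real.exp (s * r) / (C + Real.exp (2 * s * r))) :
    (∀ r ∈ Set.Icc (0:ℝ) 1,
      HasDerivWithinAt L (-(u r) * L r + μ) (Set.Icc 0 1) r) ∧
    (∫ r in (0:ℝ)..1, L r = Di) ∧
    ∀ M : ℝ → ℝ, ContDiffOn ℝ 1 M (Set.Icc 0 1) →
      (∀ r ∈ Set.Icc (0:ℝ) 1,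
        HasDerivWithinAt M (-(u r) * M r + μ) (Set.Icc 0 1) r) →
      (∫ r in (0:ℝ)..1, M r = Di) →
      Set.EqOn M L (Set.Icc 0 1) := by
  have hd0 : (d : ℝ) ≠ 0 := by positivity
  have hs0 : 0 < s := hs ▸ sqrt_pos.mpr (by positivity)
  have hμs : μ = s ^ 2 / d := by rw [hs, sq_sqrt (by positivity)]; field_simp
  have ht : exp (D + s) ≠ 1 := fun h => hne (by linarith [exp_eq_one_iff _ |>.mp h])
  obtain rfl : C = dirichletConst s D := hC
  obtain rfl : u = riccatiSol s (dirichletConst s D) := hu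
  obtain rfl : L = dirichletSol s D d ci := by
    subst hL; funext r; simp only [dirichletSol, kernelSol]; ring
  have hLI : ∫ r in (0 : ℝ)..1, dirichletSol s D d ci r = Di := by
    have hI := integral_kernelSol_dirichletConst_ne_zero hs0 ht
    change ci = (Di - D / d) / ∫ x in (0 : ℝ)..1, kernelSol s (dirichletConst s D) x at hci
    rw [integral_dirichletSol hs0 ht, hci]
    field_simp [hI]
    ring
  subst hμs
  refine ⟨fun r hr => (hasDerivAt_dirichletSol hs0 ht hd0 ci hr).hasDerivWithinAt, hLI,
    fun M _ hM hMI => eqOn_dirichletSol hs0 ht hd0 ci hM (hMI.trans hLI.symm)⟩
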